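/- Let 𝒜₃ = Av(2143, 2431, 3124, 3412, 23514, 25134, 31452, 35214, 41532, 43152). Then 𝒜₃ is exactly the set of permutations of the form σ[1,…,1,τ] (the inflation of the last point of σ by τ), where σ ranges over Av(213, 231) and τ ranges over Av(132, 312) ∪ {2413, 3142}. -/

import Mathlib

/-- A permutation of length `n ≥ 1` in one-line notation: a nonempty list of
natural numbers that is a rearrangement of `1, …, n` where `n` is its length. -/
def IsPermList (l : List ℕ) : Prop := l ≠ [] ∧ l.Perm (List.range' 1 l.length)

instance (l : List ℕ) : Decidable (IsPermList l) :=
  inferInstanceAs (Decidable (l ≠ [] ∧ l.Perm (List.range' 1 l.length)))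

/-- The type of all (finite, nonempty) permutations. -/
abbrev Permu := {l : List ℕ // IsPermList l}

/-- Helper to construct explicit permutations. -/
def p (l : List ℕ) (h : IsPermList l := by decide) : Permu := ⟨l, h⟩

/-- Pattern containment: `σ` is contained in `τ` when some (not necessarily
contiguous) subsequence of `τ` is order isomorphic to `σ`. -/
def Contains (σ τ : Permu) : Prop :=
  ∃ u : List ℕ, u.Sublist τ.val ∧ u.length = σ.val.length ∧
    ∀ i j : ℕ, i < u.length → j < u.length →
      (u.getD i 0 < u.getD j 0 ↔ σ.val.getD i 0 < σ.val.getD j 0)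

/-- A pattern class: a set of permutations closed downwards under containment. -/
def IsPatternClass (A : Set Permu) : Prop :=
  ∀ σ τ : Permu, τ ∈ A → Contains σ τ → σ ∈ A

/-- `Av B` is the set of permutations containing no member of the set `B`. -/
def Av (B : Set Permu) : Set Permu := {π | ∀ β ∈ B, ¬ Contains β π}

/-- An isomorphism of pattern classes is a bijection which preserves and
reflects containment. -/
def IsIso {A B : Set Permu} (f : ↥A → ↥B) : Prop :=
  Function.Bijective f ∧
  ∀ σ τ : ↥A, Contains σ.val τ.val ↔ Contains (f σ).val (f τ).val

/-- The shadow of `τ`: the permutations of length one less that are contained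
in `τ`. -/
def shadow (τ : Permu) : Set Permu :=
  {σ : Permu | σ.val.length + 1 = τ.val.length ∧ Contains σ τ}
/-- The class 𝒜₃. -/
def A3 : Set Permu := Av
  {p [2,1,4,3], p [2,4,3,1], p [3,1,2,4], p [3,4,1,2],
   p [2,3,5,1,4], p [2,5,1,3,4], p [3,1,4,5,2], p [3,5,2,1,4],
   p [4,1,5,3,2], p [4,3,1,5,2]}
/-- The wedge class Av(132, 312). -/
def V : Set Permu := Av {p [1,3,2], p [3,1,2]}

/-- The wedge class Av(213, 231). -/
def Vup : Set Permu := Av {p [2,1,3], p [2,3,1]}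

/-- The inflation σ[1,…,1,τ] of the last point of σ by τ. -/
def inflateLast (σ τ : List ℕ) : List ℕ :=
  (σ.dropLast.map (fun x => if x < σ.getLast! then x else x + τ.length - 1))
    ++ τ.map (fun y => σ.getLast! - 1 + y)

/-!
Reading σ ∈ Av(213, 231) from the left, each entry is the minimum or the maximum of the entries
from it onwards, so σ[1,…,1,τ] arises from τ by prepending a new minimum or a new maximum, one
entry at a time. No basis element of 𝒜₃ begins with its minimum or its maximum, so prepending or
deleting an extreme first entry neither creates nor destroys a basis pattern. It remains to see
that a permutation of 𝒜₃ whose first entry c is not extreme lies in Av(132, 312) ∪ {2413, 3142}: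
an inversion among the entries above c pins it down to 2413, an ascent among those below c to
3142, and otherwise every entry is a new maximum or minimum of the entries before it. Conversely
Av(132, 312) ⊆ 𝒜₃, as every basis element contains 132 or 312.
-/

theorem List.Sublist.mem_or_exists_insertIdx {α : Type*} {s t : List α} (h : s.Sublist t) {a : α}
    (ha : a ∈ t) : a ∈ s ∨ ∃ i ≤ s.length, (s.insertIdx i a).Sublist t := by
  induction h with
  | slnil => simp at ha
  | @cons s t b h ih =>
    rcases List.mem_cons.mp ha with rfl | ha
    · exact .inr ⟨0, Nat.zero_le _, h.cons_cons a⟩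
    · exact (ih ha).imp_right fun ⟨i, hi, h⟩ => ⟨i, hi, h.cons b⟩
  | @cons_cons s t b h ih =>
    rcases List.mem_cons.mp ha with rfl | ha
    · exact .inl (List.mem_cons_self ..)
    · refine (ih ha).imp (List.mem_cons_of_mem b) fun ⟨i, hi, h⟩ => ⟨i + 1, ?_, ?_⟩
      · simpa using hi
      · simpa using h.cons_cons b

theorem List.pair_sublist_or_of_mem {α : Type*} {t : List α} {a b : α} (ha : a ∈ t) (hb : b ∈ t)
    (hab : a ≠ b) : [a, b].Sublist t ∨ [b, a].Sublist t := by
  rcases (List.singleton_sublist.mpr ha).mem_or_exists_insertIdx hb with hb | ⟨i, hi, h⟩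
  · exact absurd (List.mem_singleton.mp hb).symm hab
  · simp only [List.length_singleton] at hi
    interval_cases i <;> simp_all

theorem List.Sublist.pair_insert {α : Type*} {t : List α} {x y a : α} (h : [x, y].Sublist t)
    (ha : a ∈ t) :
    a = x ∨ a = y ∨ [a, x, y].Sublist t ∨ [x, a, y].Sublist t ∨ [x, y, a].Sublist t := by
  rcases h.mem_or_exists_insertIdx ha with ha | ⟨i, hi, h⟩
  · simp only [List.mem_cons, List.not_mem_nil, or_false] at ha
    tauto
  · simp only [List.length_cons, List.length_nil] at hi
    interval_cases i <;> simp_all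

theorem List.Sublist.triple_insert {α : Type*} {t : List α} {x y z a : α}
    (h : [x, y, z].Sublist t) (ha : a ∈ t) :
    a = x ∨ a = y ∨ a = z ∨ [a, x, y, z].Sublist t ∨ [x, a, y, z].Sublist t ∨
      [x, y, a, z].Sublist t ∨ [x, y, z, a].Sublist t := by
  rcases h.mem_or_exists_insertIdx ha with ha | ⟨i, hi, h⟩
  · simp only [List.mem_cons, List.not_mem_nil, or_false] at ha
    tauto
  · simp only [List.length_cons, List.length_nil] at hi
    interval_cases i <;> simp_all

theorem List.Sublist.eq_of_subset_of_nodup {α : Type*} {s t : List α} (h : s.Sublist t)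
    (hts : t ⊆ s) (hnd : t.Nodup) : s = t :=
  h.eq_of_length_le (hnd.length_le_of_subset hts)

def SameOrder (u v : List ℕ) : Prop :=
  u.length = v.length ∧
    ∀ i j : ℕ, i < u.length → j < u.length → (u.getD i 0 < u.getD j 0 ↔ v.getD i 0 < v.getD j 0)

/-- `Contains` on bare lists, so that constructions need not carry `IsPermList` proofs. -/
def Occurs (β l : List ℕ) : Prop := ∃ u, u.Sublist l ∧ SameOrder u β

theorem contains_iff_occurs {σ τ : Permu} : Contains σ τ ↔ Occurs σ.val τ.val := Iff.rfl

namespace SameOrder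

theorem trans {u v w : List ℕ} (h₁ : SameOrder u v) (h₂ : SameOrder v w) : SameOrder u w :=
  ⟨h₁.1.trans h₂.1, fun i j hi hj => (h₁.2 i j hi hj).trans (h₂.2 i j (h₁.1 ▸ hi) (h₁.1 ▸ hj))⟩

theorem symm {u v : List ℕ} (h : SameOrder u v) : SameOrder v u :=
  ⟨h.1.symm, fun i j hi hj => (h.2 i j (h.1 ▸ hi) (h.1 ▸ hj)).symm⟩

theorem getElem_lt_iff {u v : List ℕ} (h : SameOrder u v) {i j : ℕ} (hi : i < v.length)
    (hj : j < v.length) : u[i]'(h.1 ▸ hi) < u[j]'(h.1 ▸ hj) ↔ v[i] < v[j] := by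
  have := h.2 i j (h.1 ▸ hi) (h.1 ▸ hj)
  rwa [List.getD_eq_getElem _ _ (h.1 ▸ hi), List.getD_eq_getElem _ _ (h.1 ▸ hj),
    List.getD_eq_getElem _ _ hi, List.getD_eq_getElem _ _ hj] at this

theorem map_of_strictMonoOn {f : ℕ → ℕ} {u : List ℕ} (hf : StrictMonoOn f {x | x ∈ u}) :
    SameOrder (u.map f) u := by
  refine ⟨List.length_map _, fun i j hi hj => ?_⟩
  rw [List.length_map] at hi hj
  rw [List.getD_eq_getElem _ _ (by simpa using hi), List.getD_eq_getElem _ _ (by simpa using hj),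
    List.getD_eq_getElem _ _ hi, List.getD_eq_getElem _ _ hj, List.getElem_map, List.getElem_map]
  exact hf.lt_iff_lt (List.getElem_mem hi) (List.getElem_mem hj)

/-- The map sends each entry of `v` to the entry of `u` at its first position in `v`. -/
theorem exists_eq_map {u v : List ℕ} (h : SameOrder u v) :
    ∃ f : ℕ → ℕ, StrictMonoOn f {x | x ∈ v} ∧ u = v.map f := by
  refine ⟨fun x => u.getD (v.idxOf x) 0, fun x hx y hy hxy => ?_, ?_⟩
  · have hx' := List.idxOf_lt_length_of_mem hx
    have hy' := List.idxOf_lt_length_of_mem hy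
    simp only [List.getD_eq_getElem _ _ (h.1 ▸ hx'), List.getD_eq_getElem _ _ (h.1 ▸ hy')]
    rw [h.getElem_lt_iff hx' hy', List.getElem_idxOf, List.getElem_idxOf]
    exact hxy
  · refine List.ext_getElem (by simp [h.1]) fun i hi hi' => ?_
    have hi'' : i < v.length := by simpa using hi'
    have hk := List.idxOf_lt_length_of_mem (List.getElem_mem hi'')
    have h₁ := h.getElem_lt_iff hk hi''
    have h₂ := h.getElem_lt_iff hi'' hk
    rw [List.getElem_idxOf] at h₁ h₂
    simp only [List.getElem_map, List.getD_eq_getElem _ _ (h.1 ▸ hk)]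
    simp only [lt_irrefl, iff_false, not_lt] at h₁ h₂
    exact le_antisymm h₁ h₂

end SameOrder

namespace Occurs

theorem mono {β l m : List ℕ} (h : Occurs β m) (hs : m.Sublist l) : Occurs β l :=
  let ⟨u, hu, hβ⟩ := h
  ⟨u, hu.trans hs, hβ⟩

theorem trans {α β l : List ℕ} (h₁ : Occurs α β) (h₂ : Occurs β l) : Occurs α l := by
  obtain ⟨w, hwβ, hwα⟩ := h₁
  obtain ⟨u, hul, huβ⟩ := h₂
  obtain ⟨f, hf, rfl⟩ := huβ.exists_eq_map
  exact ⟨w.map f, (hwβ.map f).trans hul,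
    (SameOrder.map_of_strictMonoOn (hf.mono fun x hx => hwβ.subset hx)).trans hwα⟩

theorem cons_elim {β l : List ℕ} {a : ℕ} (h : Occurs β (a :: l)) :
    Occurs β l ∨ ∀ x ∈ β, ∃ y ∈ a :: l, (y < a ↔ x < β.headD 0) ∧ (a < y ↔ β.headD 0 < x) := by
  obtain ⟨u, hu, huβ⟩ := h
  rcases List.sublist_cons_iff.mp hu with hu | ⟨u', rfl, hu'⟩
  · exact .inl ⟨u, hu, huβ⟩
  refine .inr fun x hx => ?_
  obtain ⟨j, hj, rfl⟩ := List.getElem_of_mem hx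
  have hj' : j < (a :: u').length := huβ.1 ▸ hj
  have h0 : 0 < β.length := by omega
  refine ⟨(a :: u')[j], (List.cons_sublist_cons.mpr hu').subset (List.getElem_mem hj'), ?_, ?_⟩
  · simpa [List.headD_eq_head?_getD, List.head?_eq_getElem?, h0] using huβ.getElem_lt_iff hj h0
  · simpa [List.headD_eq_head?_getD, List.head?_eq_getElem?, h0] using huβ.getElem_lt_iff h0 hj

theorem of_cons_of_forall_lt {β l : List ℕ} {a : ℕ} (h : Occurs β (a :: l))
    (ha : ∀ v ∈ l, a < v) (hβ : ∃ x ∈ β, x < β.headD 0) : Occurs β l := by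
  refine h.cons_elim.resolve_right fun hall => ?_
  obtain ⟨x, hx, hxb⟩ := hβ
  obtain ⟨y, hy, hya, -⟩ := hall x hx
  rcases List.mem_cons.mp hy with rfl | hy
  · exact lt_irrefl _ (hya.mpr hxb)
  · exact lt_asymm (ha y hy) (hya.mpr hxb)

theorem of_cons_of_forall_gt {β l : List ℕ} {a : ℕ} (h : Occurs β (a :: l))
    (ha : ∀ v ∈ l, v < a) (hβ : ∃ x ∈ β, β.headD 0 < x) : Occurs β l := by
  refine h.cons_elim.resolve_right fun hall => ?_
  obtain ⟨x, hx, hbx⟩ := hβ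
  obtain ⟨y, hy, -, hay⟩ := hall x hx
  rcases List.mem_cons.mp hy with rfl | hy
  · exact lt_irrefl _ (hay.mpr hbx)
  · exact lt_asymm (ha y hy) (hay.mpr hbx)

end Occurs

theorem occurs_map_iff {f : ℕ → ℕ} (hf : StrictMono f) {β l : List ℕ} :
    Occurs β (l.map f) ↔ Occurs β l := by
  constructor
  · rintro ⟨u, hu, huβ⟩
    obtain ⟨u', hu', rfl⟩ := List.sublist_map_iff.mp hu
    exact ⟨u', hu', (SameOrder.map_of_strictMonoOn (hf.strictMonoOn _)).symm.trans huβ⟩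
  · rintro ⟨u, hu, huβ⟩
    exact ⟨u.map f, hu.map f, (SameOrder.map_of_strictMonoOn (hf.strictMonoOn _)).trans huβ⟩

instance (β l : List ℕ) : Decidable (Occurs β l) :=
  decidable_of_iff (∃ u ∈ l.sublists, u.length = β.length ∧ ∀ i < u.length, ∀ j < u.length,
      (u.getD i 0 < u.getD j 0 ↔ β.getD i 0 < β.getD j 0)) <| by
    simp only [List.mem_sublists, Occurs, SameOrder]
    exact exists_congr fun u => and_congr_right fun _ => and_congr_right fun _ =>
      ⟨fun h i j hi hj => h i hi j hj, fun h i hi j hj => h i j hi hj⟩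

theorem sameOrder_iff_forall_fin {u v : List ℕ} {n : ℕ} (hu : u.length = n) (hv : v.length = n) :
    SameOrder u v ↔ ∀ i j : Fin n, (u.getD i 0 < u.getD j 0 ↔ v.getD i 0 < v.getD j 0) := by
  subst hu
  exact ⟨fun h i j => h.2 i j i.2 j.2, fun h => ⟨hv.symm, fun i j hi hj => h ⟨i, hi⟩ ⟨j, hj⟩⟩⟩

theorem occurs_iff_exists₃ {β l : List ℕ} (hβ : β.length = 3) :
    Occurs β l ↔ ∃ a b c, [a, b, c].Sublist l ∧
      ∀ i j : Fin 3, ([a, b, c].getD i 0 < [a, b, c].getD j 0 ↔ β.getD i 0 < β.getD j 0) := by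
  constructor
  · rintro ⟨u, hu, huβ⟩
    obtain ⟨a, b, c, rfl⟩ := List.length_eq_three.mp (huβ.1.trans hβ)
    exact ⟨a, b, c, hu, (sameOrder_iff_forall_fin rfl hβ).mp huβ⟩
  · rintro ⟨a, b, c, hu, h⟩
    exact ⟨_, hu, (sameOrder_iff_forall_fin rfl hβ).mpr h⟩

theorem occurs_iff_exists₄ {β l : List ℕ} (hβ : β.length = 4) :
    Occurs β l ↔ ∃ a b c d, [a, b, c, d].Sublist l ∧
      ∀ i j : Fin 4, ([a, b, c, d].getD i 0 < [a, b, c, d].getD j 0 ↔ β.getD i 0 < β.getD j 0) := by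
  constructor
  · rintro ⟨u, hu, huβ⟩
    obtain ⟨a, b, c, d, rfl⟩ := List.length_eq_four.mp (huβ.1.trans hβ)
    exact ⟨a, b, c, d, hu, (sameOrder_iff_forall_fin rfl hβ).mp huβ⟩
  · rintro ⟨a, b, c, d, hu, h⟩
    exact ⟨_, hu, (sameOrder_iff_forall_fin rfl hβ).mpr h⟩

theorem occurs_iff_exists₅ {β l : List ℕ} (hβ : β.length = 5) :
    Occurs β l ↔ ∃ a b c d e, [a, b, c, d, e].Sublist l ∧
      ∀ i j : Fin 5,
        ([a, b, c, d, e].getD i 0 < [a, b, c, d, e].getD j 0 ↔ β.getD i 0 < β.getD j 0) := by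
  constructor
  · rintro ⟨u, hu, huβ⟩
    match u, huβ.1.trans hβ with
    | [a, b, c, d, e], _ => exact ⟨a, b, c, d, e, hu, (sameOrder_iff_forall_fin rfl hβ).mp huβ⟩
  · rintro ⟨a, b, c, d, e, hu, h⟩
    exact ⟨_, hu, (sameOrder_iff_forall_fin rfl hβ).mpr h⟩

theorem occurs_132_iff {l : List ℕ} :
    Occurs [1, 3, 2] l ↔ ∃ a b c, [a, b, c].Sublist l ∧ a < c ∧ c < b :=
  (occurs_iff_exists₃ rfl).trans <| exists₃_congr fun _ _ _ => and_congr_right fun _ => by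
    simp [Fin.forall_fin_succ]; omega

theorem occurs_312_iff {l : List ℕ} :
    Occurs [3, 1, 2] l ↔ ∃ a b c, [a, b, c].Sublist l ∧ b < c ∧ c < a :=
  (occurs_iff_exists₃ rfl).trans <| exists₃_congr fun _ _ _ => and_congr_right fun _ => by
    simp [Fin.forall_fin_succ]; omega

theorem occurs_213_iff {l : List ℕ} :
    Occurs [2, 1, 3] l ↔ ∃ a b c, [a, b, c].Sublist l ∧ b < a ∧ a < c :=
  (occurs_iff_exists₃ rfl).trans <| exists₃_congr fun _ _ _ => and_congr_right fun _ => by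
    simp [Fin.forall_fin_succ]; omega

theorem occurs_231_iff {l : List ℕ} :
    Occurs [2, 3, 1] l ↔ ∃ a b c, [a, b, c].Sublist l ∧ c < a ∧ a < b :=
  (occurs_iff_exists₃ rfl).trans <| exists₃_congr fun _ _ _ => and_congr_right fun _ => by
    simp [Fin.forall_fin_succ]; omega

theorem occurs_2143_iff {l : List ℕ} :
    Occurs [2, 1, 4, 3] l ↔ ∃ a b c d, [a, b, c, d].Sublist l ∧ b < a ∧ a < d ∧ d < c :=
  (occurs_iff_exists₄ rfl).trans <| exists₄_congr fun _ _ _ _ => and_congr_right fun _ => by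
    simp [Fin.forall_fin_succ]; omega

theorem occurs_2431_iff {l : List ℕ} :
    Occurs [2, 4, 3, 1] l ↔ ∃ a b c d, [a, b, c, d].Sublist l ∧ d < a ∧ a < c ∧ c < b :=
  (occurs_iff_exists₄ rfl).trans <| exists₄_congr fun _ _ _ _ => and_congr_right fun _ => by
    simp [Fin.forall_fin_succ]; omega

theorem occurs_3124_iff {l : List ℕ} :
    Occurs [3, 1, 2, 4] l ↔ ∃ a b c d, [a, b, c, d].Sublist l ∧ b < c ∧ c < a ∧ a < d :=
  (occurs_iff_exists₄ rfl).trans <| exists₄_congr fun _ _ _ _ => and_congr_right fun _ => by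
    simp [Fin.forall_fin_succ]; omega

theorem occurs_3412_iff {l : List ℕ} :
    Occurs [3, 4, 1, 2] l ↔ ∃ a b c d, [a, b, c, d].Sublist l ∧ c < d ∧ d < a ∧ a < b :=
  (occurs_iff_exists₄ rfl).trans <| exists₄_congr fun _ _ _ _ => and_congr_right fun _ => by
    simp [Fin.forall_fin_succ]; omega

theorem occurs_23514_iff {l : List ℕ} :
    Occurs [2, 3, 5, 1, 4] l ↔
      ∃ a b c d e, [a, b, c, d, e].Sublist l ∧ d < a ∧ a < b ∧ b < e ∧ e < c :=
  (occurs_iff_exists₅ rfl).trans <| exists₅_congr fun _ _ _ _ _ => and_congr_right fun _ => by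
    simp [Fin.forall_fin_succ]; omega

theorem occurs_25134_iff {l : List ℕ} :
    Occurs [2, 5, 1, 3, 4] l ↔
      ∃ a b c d e, [a, b, c, d, e].Sublist l ∧ c < a ∧ a < d ∧ d < e ∧ e < b :=
  (occurs_iff_exists₅ rfl).trans <| exists₅_congr fun _ _ _ _ _ => and_congr_right fun _ => by
    simp [Fin.forall_fin_succ]; omega

theorem occurs_31452_iff {l : List ℕ} :
    Occurs [3, 1, 4, 5, 2] l ↔
      ∃ a b c d e, [a, b, c, d, e].Sublist l ∧ b < e ∧ e < a ∧ a < c ∧ c < d :=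
  (occurs_iff_exists₅ rfl).trans <| exists₅_congr fun _ _ _ _ _ => and_congr_right fun _ => by
    simp [Fin.forall_fin_succ]; omega

theorem occurs_35214_iff {l : List ℕ} :
    Occurs [3, 5, 2, 1, 4] l ↔
      ∃ a b c d e, [a, b, c, d, e].Sublist l ∧ d < c ∧ c < a ∧ a < e ∧ e < b :=
  (occurs_iff_exists₅ rfl).trans <| exists₅_congr fun _ _ _ _ _ => and_congr_right fun _ => by
    simp [Fin.forall_fin_succ]; omega

theorem occurs_41532_iff {l : List ℕ} :
    Occurs [4, 1, 5, 3, 2] l ↔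
      ∃ a b c d e, [a, b, c, d, e].Sublist l ∧ b < e ∧ e < d ∧ d < a ∧ a < c :=
  (occurs_iff_exists₅ rfl).trans <| exists₅_congr fun _ _ _ _ _ => and_congr_right fun _ => by
    simp [Fin.forall_fin_succ]; omega

theorem occurs_43152_iff {l : List ℕ} :
    Occurs [4, 3, 1, 5, 2] l ↔
      ∃ a b c d e, [a, b, c, d, e].Sublist l ∧ c < e ∧ e < b ∧ b < a ∧ a < d :=
  (occurs_iff_exists₅ rfl).trans <| exists₅_congr fun _ _ _ _ _ => and_congr_right fun _ => by
    simp [Fin.forall_fin_succ]; omega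

def consMin (l : List ℕ) : List ℕ := 1 :: l.map (· + 1)

def consMax (l : List ℕ) : List ℕ := (l.length + 1) :: l

@[simp]
theorem length_consMin (l : List ℕ) : (consMin l).length = l.length + 1 := by
  simp [consMin]

namespace IsPermList

variable {l r : List ℕ}

theorem mem_iff (h : IsPermList l) {v : ℕ} : v ∈ l ↔ 1 ≤ v ∧ v ≤ l.length := by
  rw [h.2.mem_iff, List.mem_range'_1]
  omega

theorem nodup (h : IsPermList l) : l.Nodup :=
  h.2.nodup_iff.mpr List.nodup_range'

theorem of_nodup (hne : l ≠ []) (hnd : l.Nodup) (hmem : ∀ v ∈ l, 1 ≤ v ∧ v ≤ l.length) :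
    IsPermList l := by
  refine ⟨hne, (hnd.subperm fun v hv => ?_).perm_of_length_le (by simp)⟩
  rw [List.mem_range'_1]
  have := hmem v hv
  omega

theorem pos (h : IsPermList l) {v : ℕ} (hv : v ∈ l) : 0 < v := (h.mem_iff.mp hv).1

theorem le_length (h : IsPermList l) {v : ℕ} (hv : v ∈ l) : v ≤ l.length := (h.mem_iff.mp hv).2

theorem mem_tail {c v : ℕ} (h : IsPermList (c :: r)) (h1 : 1 ≤ v) (hn : v ≤ r.length + 1)
    (hc : v ≠ c) : v ∈ r :=
  (List.mem_cons.mp (h.mem_iff.mpr ⟨h1, by simpa using hn⟩)).resolve_left hc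

theorem bounds_of_mem_tail {c v : ℕ} (h : IsPermList (c :: r)) (hv : v ∈ r) :
    1 ≤ v ∧ v ≤ r.length + 1 ∧ v ≠ c := by
  have := h.mem_iff.mp (List.mem_cons_of_mem c hv)
  have : v ≠ c := fun e => (List.nodup_cons.mp h.nodup).1 (e ▸ hv)
  simp only [List.length_cons] at *
  omega

theorem eq_one_of_singleton {c : ℕ} (h : IsPermList [c]) : c = 1 := by
  have := h.mem_iff.mp (List.mem_singleton_self c)
  simp only [List.length_singleton] at this
  omega

theorem consMin (h : IsPermList l) : IsPermList (consMin l) := by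
  refine of_nodup (by simp [_root_.consMin]) ?_ fun v hv => ?_
  · refine List.nodup_cons.mpr ⟨fun h1 => ?_, h.nodup.map (add_left_injective 1)⟩
    obtain ⟨w, hw, hw1⟩ := List.mem_map.mp h1
    have := h.mem_iff.mp hw
    omega
  · simp only [_root_.consMin, List.length_cons, List.length_map]
    rcases List.mem_cons.mp hv with rfl | hv
    · omega
    · obtain ⟨w, hw, rfl⟩ := List.mem_map.mp hv
      have := h.mem_iff.mp hw
      omega

theorem consMax (h : IsPermList l) : IsPermList (consMax l) := by
  refine of_nodup (by simp [_root_.consMax]) ?_ fun v hv => ?_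
  · exact List.nodup_cons.mpr ⟨fun hl => by simpa using h.mem_iff.mp hl, h.nodup⟩
  · simp only [_root_.consMax, List.mem_cons, h.mem_iff, List.length_cons] at hv ⊢
    omega

theorem exists_eq_consMin (h : IsPermList (1 :: r)) (hr : r ≠ []) :
    ∃ s, IsPermList s ∧ 1 :: r = _root_.consMin s := by
  have hr2 : ∀ v ∈ r, 2 ≤ v ∧ v ≤ r.length + 1 := fun v hv => by
    have := h.mem_iff.mp (List.mem_cons_of_mem 1 hv)
    have : v ≠ 1 := fun hv1 => (List.nodup_cons.mp h.nodup).1 (hv1 ▸ hv)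
    simp only [List.length_cons] at *
    omega
  refine ⟨r.map (· - 1), of_nodup (by simpa using hr) ?_ fun v hv => ?_, ?_⟩
  · refine h.nodup.of_cons.map_on fun x hx y hy hxy => ?_
    have := hr2 x hx; have := hr2 y hy
    omega
  · obtain ⟨w, hw, rfl⟩ := List.mem_map.mp hv
    have := hr2 w hw
    simp only [List.length_map]
    omega
  · simp only [_root_.consMin, List.map_map, List.cons.injEq, true_and]
    refine ((List.map_congr_left fun v hv => ?_).trans r.map_id).symm
    have := hr2 v hv
    simp only [Function.comp_apply, id]
    omega

theorem of_consMax (h : IsPermList (_root_.consMax r)) (hr : r ≠ []) : IsPermList r := by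
  have hnd := List.nodup_cons.mp h.nodup
  refine of_nodup hr hnd.2 fun v hv => ?_
  have := h.mem_iff.mp (List.mem_cons_of_mem _ hv)
  have : v ≠ r.length + 1 := fun e => hnd.1 (e ▸ hv)
  simp only [_root_.consMax, List.length_cons] at *
  omega

end IsPermList

def AvoidsAll (B : List (List ℕ)) (l : List ℕ) : Prop := ∀ β ∈ B, ¬ Occurs β l

instance (B : List (List ℕ)) (l : List ℕ) : Decidable (AvoidsAll B l) :=
  inferInstanceAs (Decidable (∀ β ∈ B, ¬ Occurs β l))

def A3Basis : List (List ℕ) :=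
  [[2, 1, 4, 3], [2, 4, 3, 1], [3, 1, 2, 4], [3, 4, 1, 2], [2, 3, 5, 1, 4], [2, 5, 1, 3, 4],
    [3, 1, 4, 5, 2], [3, 5, 2, 1, 4], [4, 1, 5, 3, 2], [4, 3, 1, 5, 2]]

def VBasis : List (List ℕ) := [[1, 3, 2], [3, 1, 2]]

def VupBasis : List (List ℕ) := [[2, 1, 3], [2, 3, 1]]

theorem mem_A3_iff {π : Permu} : π ∈ A3 ↔ AvoidsAll A3Basis π.val := by
  simp [A3, Av, AvoidsAll, A3Basis, p, contains_iff_occurs]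

theorem mem_V_iff {π : Permu} : π ∈ V ↔ AvoidsAll VBasis π.val := by
  simp [V, Av, AvoidsAll, VBasis, p, contains_iff_occurs]

theorem mem_Vup_iff {π : Permu} : π ∈ Vup ↔ AvoidsAll VupBasis π.val := by
  simp [Vup, Av, AvoidsAll, VupBasis, p, contains_iff_occurs]

namespace AvoidsAll

variable {B : List (List ℕ)} {l m : List ℕ}

theorem mono (h : AvoidsAll B l) (hs : m.Sublist l) : AvoidsAll B m :=
  fun β hβ hm => h β hβ (hm.mono hs)

theorem of_forall_occurs {B' : List (List ℕ)} (h : AvoidsAll B' l)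
    (hB : ∀ β ∈ B, ∃ α ∈ B', Occurs α β) : AvoidsAll B l := fun β hβ hl =>
  let ⟨α, hα, hαβ⟩ := hB β hβ
  h α hα (hαβ.trans hl)

theorem map_iff {f : ℕ → ℕ} (hf : StrictMono f) : AvoidsAll B (l.map f) ↔ AvoidsAll B l :=
  forall₂_congr fun _ _ => not_congr (occurs_map_iff hf)

theorem cons_of_forall_lt {a : ℕ} (h : AvoidsAll B l) (ha : ∀ v ∈ l, a < v)
    (hB : ∀ β ∈ B, ∃ x ∈ β, x < β.headD 0) : AvoidsAll B (a :: l) :=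
  fun β hβ hl => h β hβ (hl.of_cons_of_forall_lt ha (hB β hβ))

theorem cons_of_forall_gt {a : ℕ} (h : AvoidsAll B l) (ha : ∀ v ∈ l, v < a)
    (hB : ∀ β ∈ B, ∃ x ∈ β, β.headD 0 < x) : AvoidsAll B (a :: l) :=
  fun β hβ hl => h β hβ (hl.of_cons_of_forall_gt ha (hB β hβ))

theorem consMin_iff (hB : ∀ β ∈ B, ∃ x ∈ β, x < β.headD 0) (hl : ∀ v ∈ l, 0 < v) :
    AvoidsAll B (consMin l) ↔ AvoidsAll B l := by
  refine Iff.trans ?_ (map_iff (add_left_strictMono (a := 1)))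
  refine ⟨fun h => h.mono (List.sublist_cons_self _ _), fun h => h.cons_of_forall_lt ?_ hB⟩
  simp only [List.mem_map]
  rintro _ ⟨v, hv, rfl⟩
  exact Nat.succ_lt_succ (hl v hv)

theorem consMax_iff (hB : ∀ β ∈ B, ∃ x ∈ β, β.headD 0 < x) (hl : ∀ v ∈ l, v ≤ l.length) :
    AvoidsAll B (consMax l) ↔ AvoidsAll B l :=
  ⟨fun h => h.mono (List.sublist_cons_self _ _),
    fun h => h.cons_of_forall_gt (fun v hv => Nat.lt_succ_of_le (hl v hv)) hB⟩

end AvoidsAll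

theorem avoidsAll_A3Basis_of_avoidsAll_VBasis {l : List ℕ} (h : AvoidsAll VBasis l) :
    AvoidsAll A3Basis l :=
  h.of_forall_occurs (by decide)

inductive IsVup : List ℕ → Prop
  | one : IsVup [1]
  | consMin {l : List ℕ} : IsVup l → IsVup (consMin l)
  | consMax {l : List ℕ} : IsVup l → IsVup (consMax l)

namespace IsVup

variable {l : List ℕ}

theorem isPermList (h : IsVup l) : IsPermList l := by
  induction h with
  | one => decide
  | consMin _ ih => exact ih.consMin
  | consMax _ ih => exact ih.consMax

theorem avoidsAll (h : IsVup l) : AvoidsAll VupBasis l := by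
  induction h with
  | one => decide
  | @consMin l hl ih =>
    exact (AvoidsAll.consMin_iff (by decide) fun _ => hl.isPermList.pos).mpr ih
  | @consMax l hl ih =>
    exact (AvoidsAll.consMax_iff (by decide) fun _ => hl.isPermList.le_length).mpr ih

end IsVup

theorem IsPermList.head_eq_one_or_eq_length_of_avoidsAll_VupBasis {c : ℕ} {r : List ℕ}
    (h : IsPermList (c :: r)) (hr : r ≠ []) (hav : AvoidsAll VupBasis (c :: r)) :
    c = 1 ∨ c = r.length + 1 := by
  by_contra! hc
  have hlen : 0 < r.length := List.length_pos_iff.mpr hr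
  have hcb := h.mem_iff.mp List.mem_cons_self
  simp only [List.length_cons] at hcb
  rcases List.pair_sublist_or_of_mem (h.mem_tail le_rfl (by omega) (by omega))
    (h.mem_tail (by omega) le_rfl (by omega)) (by omega) with hs | hs
  · exact hav _ (by decide) (occurs_213_iff.mpr ⟨c, 1, _, hs.cons_cons c, by omega, by omega⟩)
  · exact hav _ (by decide) (occurs_231_iff.mpr ⟨c, _, 1, hs.cons_cons c, by omega, by omega⟩)

theorem IsVup.of_avoidsAll {l : List ℕ} (hl : IsPermList l) (hav : AvoidsAll VupBasis l) :
    IsVup l := by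
  induction hlen : l.length generalizing l with
  | zero => exact absurd (List.length_eq_zero_iff.mp hlen) hl.1
  | succ n ih =>
    obtain ⟨c, r, rfl⟩ := List.exists_cons_of_ne_nil hl.1
    rcases eq_or_ne r [] with rfl | hr
    · rw [hl.eq_one_of_singleton]; exact .one
    rcases hl.head_eq_one_or_eq_length_of_avoidsAll_VupBasis hr hav with rfl | rfl
    · obtain ⟨s, hs, hrs⟩ := hl.exists_eq_consMin hr
      rw [hrs] at hav ⊢
      have hslen := congrArg List.length hrs
      simp only [length_consMin, List.length_cons] at hslen hlen
      exact .consMin (ih hs ((AvoidsAll.consMin_iff (by decide) fun _ => hs.pos).mp hav) (by omega))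
    · have hr' := IsPermList.of_consMax hl hr
      exact .consMax (ih hr' ((AvoidsAll.consMax_iff (by decide) fun _ => hr'.le_length).mp hav)
        (by simpa using hlen))

theorem inflateLast_singleton_one (t : List ℕ) : inflateLast [1] t = t := by
  simp [inflateLast]

theorem inflateLast_concat (s t : List ℕ) (L : ℕ) :
    inflateLast (s ++ [L]) t =
      s.map (fun x => if x < L then x else x + t.length - 1) ++ t.map (L - 1 + ·) := by
  simp [inflateLast]

theorem inflateLast_consMin {s t : List ℕ} (hs : s ≠ []) (hs0 : ∀ v ∈ s, 0 < v) :
    inflateLast (consMin s) t = consMin (inflateLast s t) := by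
  obtain ⟨s, L, rfl⟩ := (List.eq_nil_or_concat s).resolve_left hs
  have hL : 0 < L := hs0 L (by simp)
  simp only [List.concat_eq_append, consMin, List.map_append, List.map_cons, List.map_nil,
    ← List.cons_append, inflateLast_concat, List.map_map]
  rw [if_pos (by omega)]
  simp only [List.cons_append, List.cons.injEq, true_and]
  congr 1 <;> refine List.map_congr_left fun x _ => ?_ <;> simp only [Function.comp_apply]
  · split_ifs <;> omega
  · omega

theorem inflateLast_consMax {s t : List ℕ} (hs : s ≠ []) (hsb : ∀ v ∈ s, v ≤ s.length) :
    inflateLast (consMax s) t = consMax (inflateLast s t) := by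
  obtain ⟨s, L, rfl⟩ := (List.eq_nil_or_concat s).resolve_left hs
  have hL : L ≤ s.length + 1 := by simpa using hsb L (by simp)
  simp only [List.concat_eq_append, consMax, ← List.cons_append, inflateLast_concat,
    List.map_cons, List.length_append, List.length_map, List.length_cons, List.length_nil]
  rw [if_neg (by omega)]
  congr 2
  omega

namespace IsVup

variable {σ t : List ℕ}

theorem isPermList_inflateLast (hσ : IsVup σ) (ht : IsPermList t) :
    IsPermList (inflateLast σ t) := by
  induction hσ with
  | one => rwa [inflateLast_singleton_one]
  | @consMin l hl ih =>
    rw [inflateLast_consMin hl.isPermList.1 (fun _ => hl.isPermList.pos)]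
    exact ih.consMin
  | @consMax l hl ih =>
    rw [inflateLast_consMax hl.isPermList.1 (fun _ => hl.isPermList.le_length)]
    exact ih.consMax

theorem avoidsAll_A3Basis_inflateLast (hσ : IsVup σ) (ht : IsPermList t)
    (hav : AvoidsAll A3Basis t) : AvoidsAll A3Basis (inflateLast σ t) := by
  induction hσ with
  | one => rwa [inflateLast_singleton_one]
  | @consMin l hl ih =>
    rw [inflateLast_consMin hl.isPermList.1 (fun _ => hl.isPermList.pos)]
    exact (AvoidsAll.consMin_iff (by decide)
      fun _ => (hl.isPermList_inflateLast ht).pos).mpr ih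
  | @consMax l hl ih =>
    rw [inflateLast_consMax hl.isPermList.1 (fun _ => hl.isPermList.le_length)]
    exact (AvoidsAll.consMax_iff (by decide)
      fun _ => (hl.isPermList_inflateLast ht).le_length).mpr ih

end IsVup

/-! In the lemmas on an inversion above the first entry `c`, `m` plays the role of the entry `1`;
in those on an ascent below `c`, of the largest entry `n`. -/

section InteriorHead

variable {c x y m : ℕ} {r : List ℕ}

theorem sublist_of_inversion_above (hav : AvoidsAll A3Basis (c :: r)) (hxy : [x, y].Sublist r)
    (hcy : c < y) (hyx : y < x) (hm : m ∈ r) (hmc : m < c) : [x, m, y].Sublist r := by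
  rcases hxy.pair_insert hm with rfl | rfl | h | h | h
  · omega
  · omega
  · exact absurd (occurs_2143_iff.mpr ⟨c, m, x, y, h.cons_cons c, by omega⟩) (hav _ (by decide))
  · exact h
  · exact absurd (occurs_2431_iff.mpr ⟨c, x, y, m, h.cons_cons c, by omega⟩) (hav _ (by decide))

theorem eq_of_mem_above_of_inversion (hav : AvoidsAll A3Basis (c :: r))
    (h : [x, m, y].Sublist r) (hcy : c < y) (hyx : y < x) (hmc : m < c) {a : ℕ} (ha : a ∈ r)
    (hca : c < a) : a = x ∨ a = y := by
  by_contra! hne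
  have hax := lt_or_gt_of_ne hne.1
  have hay := lt_or_gt_of_ne hne.2
  rcases h.triple_insert ha with rfl | rfl | rfl | h | h | h | h
  · exact hne.1 rfl
  · omega
  · exact hne.2 rfl
  · rcases hax with hax | hax
    · rcases hay with hay | hay
      · exact hav _ (by decide) (occurs_23514_iff.mpr ⟨c, a, x, m, y, h.cons_cons c, by omega⟩)
      · exact hav _ (by decide) (occurs_3412_iff.mpr ⟨a, x, m, y, h.cons c, by omega⟩)
    · have h' := (by simp : [a, x, m].Sublist [a, x, m, y]).trans h
      exact hav _ (by decide) (occurs_2431_iff.mpr ⟨c, a, x, m, h'.cons_cons c, by omega⟩)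
  · rcases hax with hax | hax
    · have h' := (by simp : [x, a, m].Sublist [x, a, m, y]).trans h
      exact hav _ (by decide) (occurs_2431_iff.mpr ⟨c, x, a, m, h'.cons_cons c, by omega⟩)
    · exact hav _ (by decide) (occurs_3412_iff.mpr ⟨x, a, m, y, h.cons c, by omega⟩)
  · rcases hay with hay | hay
    · exact hav _ (by decide) (occurs_25134_iff.mpr ⟨c, x, m, a, y, h.cons_cons c, by omega⟩)
    · have h' := (by simp : [m, a, y].Sublist [x, m, a, y]).trans h
      exact hav _ (by decide) (occurs_2143_iff.mpr ⟨c, m, a, y, h'.cons_cons c, by omega⟩)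
  · rcases hay with hay | hay
    · have h' := (by simp : [m, y, a].Sublist [x, m, y, a]).trans h
      exact hav _ (by decide) (occurs_2143_iff.mpr ⟨c, m, y, a, h'.cons_cons c, by omega⟩)
    · rcases hax with hax | hax
      · exact hav _ (by decide) (occurs_25134_iff.mpr ⟨c, x, m, y, a, h.cons_cons c, by omega⟩)
      · exact hav _ (by decide) (occurs_3124_iff.mpr ⟨x, m, y, a, h.cons c, by omega⟩)

theorem not_mem_below_of_inversion (hav : AvoidsAll A3Basis (c :: r))
    (h : [x, m, y].Sublist r) (hcy : c < y) (hyx : y < x) {b : ℕ} (hb : b ∈ r) (hmb : m < b)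
    (hbc : b < c) : False := by
  rcases h.triple_insert hb with rfl | rfl | rfl | h | h | h | h
  · omega
  · omega
  · omega
  · have h' := (by simp : [b, x, y].Sublist [b, x, m, y]).trans h
    exact hav _ (by decide) (occurs_2143_iff.mpr ⟨c, b, x, y, h'.cons_cons c, by omega⟩)
  · exact hav _ (by decide) (occurs_35214_iff.mpr ⟨c, x, b, m, y, h.cons_cons c, by omega⟩)
  · have h' := (by simp : [x, m, b].Sublist [x, m, b, y]).trans h
    exact hav _ (by decide) (occurs_3412_iff.mpr ⟨c, x, m, b, h'.cons_cons c, by omega⟩)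
  · have h' := (by simp : [x, y, b].Sublist [x, m, y, b]).trans h
    exact hav _ (by decide) (occurs_2431_iff.mpr ⟨c, x, y, b, h'.cons_cons c, by omega⟩)

theorem sublist_of_ascent_below (hav : AvoidsAll A3Basis (c :: r)) (hxy : [x, y].Sublist r)
    (hxy' : x < y) (hyc : y < c) (hm : m ∈ r) (hcm : c < m) : [x, m, y].Sublist r := by
  rcases hxy.pair_insert hm with rfl | rfl | h | h | h
  · omega
  · omega
  · exact absurd (occurs_3412_iff.mpr ⟨c, m, x, y, h.cons_cons c, by omega⟩) (hav _ (by decide))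
  · exact h
  · exact absurd (occurs_3124_iff.mpr ⟨c, x, y, m, h.cons_cons c, by omega⟩) (hav _ (by decide))

theorem eq_of_mem_below_of_ascent (hav : AvoidsAll A3Basis (c :: r))
    (h : [x, m, y].Sublist r) (hxy : x < y) (hyc : y < c) (hcm : c < m) {e : ℕ} (he : e ∈ r)
    (hec : e < c) : e = x ∨ e = y := by
  by_contra! hne
  have hex := lt_or_gt_of_ne hne.1
  have hey := lt_or_gt_of_ne hne.2
  rcases h.triple_insert he with rfl | rfl | rfl | h | h | h | h
  · exact hne.1 rfl
  · omega
  · exact hne.2 rfl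
  · rcases hex with hex | hex
    · have h' := (by simp : [e, x, m].Sublist [e, x, m, y]).trans h
      exact hav _ (by decide) (occurs_3124_iff.mpr ⟨c, e, x, m, h'.cons_cons c, by omega⟩)
    · rcases hey with hey | hey
      · exact hav _ (by decide) (occurs_2143_iff.mpr ⟨e, x, m, y, h.cons c, by omega⟩)
      · exact hav _ (by decide) (occurs_43152_iff.mpr ⟨c, e, x, m, y, h.cons_cons c, by omega⟩)
  · rcases hex with hex | hex
    · exact hav _ (by decide) (occurs_2143_iff.mpr ⟨x, e, m, y, h.cons c, by omega⟩)
    · have h' := (by simp : [x, e, m].Sublist [x, e, m, y]).trans h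
      exact hav _ (by decide) (occurs_3124_iff.mpr ⟨c, x, e, m, h'.cons_cons c, by omega⟩)
  · rcases hey with hey | hey
    · have h' := (by simp : [m, e, y].Sublist [x, m, e, y]).trans h
      exact hav _ (by decide) (occurs_3412_iff.mpr ⟨c, m, e, y, h'.cons_cons c, by omega⟩)
    · exact hav _ (by decide) (occurs_41532_iff.mpr ⟨c, x, m, e, y, h.cons_cons c, by omega⟩)
  · rcases hey with hey | hey
    · rcases hex with hex | hex
      · exact hav _ (by decide) (occurs_2431_iff.mpr ⟨x, m, y, e, h.cons c, by omega⟩)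
      · exact hav _ (by decide) (occurs_41532_iff.mpr ⟨c, x, m, y, e, h.cons_cons c, by omega⟩)
    · have h' := (by simp : [m, y, e].Sublist [x, m, y, e]).trans h
      exact hav _ (by decide) (occurs_3412_iff.mpr ⟨c, m, y, e, h'.cons_cons c, by omega⟩)

theorem not_mem_above_of_ascent (hav : AvoidsAll A3Basis (c :: r))
    (h : [x, m, y].Sublist r) (hxy : x < y) (hyc : y < c) {a : ℕ} (ha : a ∈ r) (hca : c < a)
    (ham : a < m) : False := by
  rcases h.triple_insert ha with rfl | rfl | rfl | h | h | h | h
  · omega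
  · omega
  · omega
  · have h' := (by simp : [a, x, y].Sublist [a, x, m, y]).trans h
    exact hav _ (by decide) (occurs_3412_iff.mpr ⟨c, a, x, y, h'.cons_cons c, by omega⟩)
  · exact hav _ (by decide) (occurs_31452_iff.mpr ⟨c, x, a, m, y, h.cons_cons c, by omega⟩)
  · have h' := (by simp : [x, m, a].Sublist [x, m, a, y]).trans h
    exact hav _ (by decide) (occurs_2143_iff.mpr ⟨c, x, m, a, h'.cons_cons c, by omega⟩)
  · have h' := (by simp : [x, y, a].Sublist [x, m, y, a]).trans h
    exact hav _ (by decide) (occurs_3124_iff.mpr ⟨c, x, y, a, h'.cons_cons c, by omega⟩)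

theorem eq_2413_of_inversion_above (hl : IsPermList (c :: r)) (hav : AvoidsAll A3Basis (c :: r))
    (hc1 : 1 < c) (hxy : [x, y].Sublist r) (hcy : c < y) (hyx : y < x) :
    c :: r = [2, 4, 1, 3] := by
  have h := sublist_of_inversion_above hav hxy hcy hyx
    (hl.mem_tail le_rfl (by omega) (by omega)) hc1
  obtain rfl : [x, 1, y] = r := h.eq_of_subset_of_nodup (fun v hv => by
    obtain ⟨hv1, -, hvc⟩ := hl.bounds_of_mem_tail hv
    rcases lt_or_gt_of_ne hvc with hvc | hvc
    · obtain rfl : v = 1 := by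
        by_contra hne
        exact not_mem_below_of_inversion hav h hcy hyx hv (by omega) hvc
      simp
    · rcases eq_of_mem_above_of_inversion hav h hcy hyx hc1 hv hvc with rfl | rfl <;> simp)
    hl.nodup.of_cons
  have := hl.le_length (by simp : x ∈ c :: [x, 1, y])
  simp only [List.length_cons, List.length_nil] at this
  obtain ⟨rfl, rfl, rfl⟩ : c = 2 ∧ y = 3 ∧ x = 4 := by omega
  rfl

theorem eq_3142_of_ascent_below (hl : IsPermList (c :: r)) (hav : AvoidsAll A3Basis (c :: r))
    (hcn : c < r.length + 1) (hxy : [x, y].Sublist r) (hxy' : x < y) (hyc : y < c) :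
    c :: r = [3, 1, 4, 2] := by
  have h := sublist_of_ascent_below hav hxy hxy' hyc
    (hl.mem_tail (by omega) le_rfl (by omega)) hcn
  obtain ⟨hx1, -, -⟩ := hl.bounds_of_mem_tail (h.subset (by simp : x ∈ [x, r.length + 1, y]))
  have hr : [x, r.length + 1, y] = r := h.eq_of_subset_of_nodup (fun v hv => by
    obtain ⟨-, hvn, hvc⟩ := hl.bounds_of_mem_tail hv
    rcases lt_or_gt_of_ne hvc with hvc | hvc
    · rcases eq_of_mem_below_of_ascent hav h hxy' hyc hcn hv hvc with rfl | rfl <;> simp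
    · obtain rfl : v = r.length + 1 := by
        by_contra hne
        exact not_mem_above_of_ascent hav h hxy' hyc hv hvc (by omega)
      simp)
    hl.nodup.of_cons
  have hlen : r.length = 3 := by simpa using (congrArg List.length hr).symm
  rw [← hr, hlen]
  obtain ⟨rfl, rfl, rfl⟩ : x = 1 ∧ y = 2 ∧ c = 3 := by omega
  rfl

end InteriorHead

theorem avoidsAll_VBasis_cons {c : ℕ} {r : List ℕ} (hc : c ∉ r)
    (hinc : ∀ x y, [x, y].Sublist r → c < y → x ≤ y)
    (hdec : ∀ x y, [x, y].Sublist r → y < c → y ≤ x) : AvoidsAll VBasis (c :: r) := by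
  intro β hβ hocc
  simp only [VBasis, List.mem_cons, List.not_mem_nil, or_false] at hβ
  rcases hβ with rfl | rfl
  · obtain ⟨a, b, d, h, had, hdb⟩ := occurs_132_iff.mp hocc
    rcases List.sublist_cons_iff.mp h with h | ⟨_, ⟨⟩, h⟩
    · rcases lt_or_gt_of_ne (fun e : d = c => hc (e ▸ h.subset (by simp))) with hdc | hdc
      · exact absurd (hdec a d ((by simp : [a, d].Sublist [a, b, d]).trans h) hdc) (by omega)
      · exact absurd (hinc b d ((by simp : [b, d].Sublist [a, b, d]).trans h) hdc) (by omega)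
    · exact absurd (hinc b d h (by omega)) (by omega)
  · obtain ⟨a, b, d, h, hbd, hda⟩ := occurs_312_iff.mp hocc
    rcases List.sublist_cons_iff.mp h with h | ⟨_, ⟨⟩, h⟩
    · rcases lt_or_gt_of_ne (fun e : d = c => hc (e ▸ h.subset (by simp))) with hdc | hdc
      · exact absurd (hdec b d ((by simp : [b, d].Sublist [a, b, d]).trans h) hdc) (by omega)
      · exact absurd (hinc a d ((by simp : [a, d].Sublist [a, b, d]).trans h) hdc) (by omega)
    · exact absurd (hdec b d h (by omega)) (by omega)

theorem avoidsAll_VBasis_or_eq_of_interior_head {c : ℕ} {r : List ℕ} (hl : IsPermList (c :: r))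
    (hav : AvoidsAll A3Basis (c :: r)) (hc1 : 1 < c) (hcn : c < r.length + 1) :
    AvoidsAll VBasis (c :: r) ∨ c :: r = [2, 4, 1, 3] ∨ c :: r = [3, 1, 4, 2] := by
  by_cases hinv : ∃ x y, [x, y].Sublist r ∧ c < y ∧ y < x
  · obtain ⟨x, y, hxy, hcy, hyx⟩ := hinv
    exact .inr (.inl (eq_2413_of_inversion_above hl hav hc1 hxy hcy hyx))
  by_cases hasc : ∃ x y, [x, y].Sublist r ∧ y < c ∧ x < y
  · obtain ⟨x, y, hxy, hyc, hxy'⟩ := hasc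
    exact .inr (.inr (eq_3142_of_ascent_below hl hav hcn hxy hxy' hyc))
  push Not at hinv hasc
  exact .inl (avoidsAll_VBasis_cons (List.nodup_cons.mp hl.nodup).1 hinv hasc)

theorem exists_isVup_inflateLast_of_avoidsAll {π : List ℕ} (hπ : IsPermList π)
    (hav : AvoidsAll A3Basis π) :
    ∃ σ τ, IsVup σ ∧ IsPermList τ ∧
      (AvoidsAll VBasis τ ∨ τ = [2, 4, 1, 3] ∨ τ = [3, 1, 4, 2]) ∧ π = inflateLast σ τ := by
  induction hlen : π.length generalizing π with
  | zero => exact absurd (List.length_eq_zero_iff.mp hlen) hπ.1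
  | succ n ih =>
    obtain ⟨c, r, rfl⟩ := List.exists_cons_of_ne_nil hπ.1
    rcases eq_or_ne r [] with rfl | hr
    · rw [hπ.eq_one_of_singleton]
      exact ⟨[1], [1], .one, by decide, .inl (by decide), (inflateLast_singleton_one _).symm⟩
    have hcb := hπ.mem_iff.mp List.mem_cons_self
    simp only [List.length_cons] at hcb hlen
    rcases eq_or_ne c 1 with rfl | hc1
    · obtain ⟨s, hs, hrs⟩ := hπ.exists_eq_consMin hr
      rw [hrs] at hav ⊢
      obtain ⟨σ, τ, hσ, hτ, hτV, rfl⟩ := ih hs ((AvoidsAll.consMin_iff (by decide)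
        fun _ => hs.pos).mp hav) (by simpa [hlen] using (congrArg List.length hrs).symm)
      refine ⟨consMin σ, τ, .consMin hσ, hτ, hτV, ?_⟩
      rw [inflateLast_consMin hσ.isPermList.1 (fun _ => hσ.isPermList.pos)]
    rcases eq_or_ne c (r.length + 1) with rfl | hcn
    · have hr' := IsPermList.of_consMax hπ hr
      obtain ⟨σ, τ, hσ, hτ, hτV, rfl⟩ := ih hr' ((AvoidsAll.consMax_iff (by decide)
        fun _ => hr'.le_length).mp hav) (by omega)
      refine ⟨consMax σ, τ, .consMax hσ, hτ, hτV, ?_⟩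
      rw [inflateLast_consMax hσ.isPermList.1 (fun _ => hσ.isPermList.le_length)]
      rfl
    exact ⟨[1], c :: r, .one, hπ,
      avoidsAll_VBasis_or_eq_of_interior_head hπ hav (by omega) (by omega),
      (inflateLast_singleton_one _).symm⟩

/-- 𝒜₃ consists exactly of the permutations σ[1,…,1,τ] with
σ ∈ Av(213,231) and τ ∈ Av(132,312) ∪ {2413, 3142}. -/
theorem statement_9 :
    A3 = {π : Permu | ∃ σ τ : Permu, σ ∈ Vup ∧
      (τ ∈ V ∨ τ.val = [2,4,1,3] ∨ τ.val = [3,1,4,2]) ∧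
      π.val = inflateLast σ.val τ.val} := by
  ext π
  rw [mem_A3_iff]
  constructor
  · intro hav
    obtain ⟨σ, τ, hσ, hτ, hτV, hπ⟩ := exists_isVup_inflateLast_of_avoidsAll π.2 hav
    exact ⟨⟨σ, hσ.isPermList⟩, ⟨τ, hτ⟩, mem_Vup_iff.mpr hσ.avoidsAll, by rwa [mem_V_iff], hπ⟩
  · rintro ⟨σ, τ, hσ, hτ, hπ⟩
    rw [hπ]
    refine (IsVup.of_avoidsAll σ.2 (mem_Vup_iff.mp hσ)).avoidsAll_A3Basis_inflateLast τ.2 ?_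
    rcases hτ with hτ | hτ | hτ
    · exact avoidsAll_A3Basis_of_avoidsAll_VBasis (mem_V_iff.mp hτ)
    · rw [hτ]; decide
    · rw [hτ]; decide
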